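/- Let G be a k-regular graph and consider the ball B(n) of radius n around a vertex o, with the induced subgraph structure. Define the test function φ(x) = min(⌈n/2⌉, n - dist(o,x)) for x ∈ B(n) (so φ = ⌈n/2⌉ on B(⌊n/2⌋), decreasing linearly to 0 at distance n). Then the Rayleigh quotient of φ for the Dirichlet Laplacian Δ^D(B(n)) satisfies ⟨φ, Δ^D φ⟩/‖φ‖² ≤ γ·V(n) / (n²·V(⌊n/2⌋)) for a constant γ depending only on k. -/

import Mathlib

/-- For a connected `k`-regular graph `G`, a vertex `o` and `n ≥ 1`, the
test function `φ(x) = min(⌈n/2⌉, n - dist(o,x))` on the ball `B(n)` (equal to `⌈n/2⌉` on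
`B(⌊n/2⌋)`, decreasing linearly to `0` at distance `n`) has Dirichlet Rayleigh quotient at
most `γ·V(n)/(n²·V(⌊n/2⌋))`, where `γ` depends only on `k` and `V(m) = |B(m)|`. The
Dirichlet form is `(1/2)·Σ_{x~y, x,y ∈ B(n)} |φ(x)-φ(y)|² + Σ_{x ∈ B(n)} 2(k - d_{B(n)}(x))|φ(x)|²`. -/
theorem dirichlet_ball_rayleigh_quotient_bound (k : ℕ) :
    ∃ γ : ℝ, 0 < γ ∧
      ∀ (V : Type) [Fintype V] [DecidableEq V]
        (G : SimpleGraph V) [DecidableRel G.Adj],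
        G.Connected → G.IsRegularOfDegree k →
        ∀ (o : V) (n : ℕ), 1 ≤ n →
        let B : ℕ → Finset V := fun m => Finset.univ.filter (fun x => G.dist o x ≤ m)
        let φ : V → ℝ := fun x => ((min ((n + 1) / 2) (n - G.dist o x) : ℕ) : ℝ)
        (1 / 2 : ℝ) * (∑ x ∈ B n, ∑ y ∈ B n, if G.Adj x y then (φ x - φ y) ^ 2 else 0) +
            ∑ x ∈ B n, 2 * ((k : ℝ) - ((G.neighborFinset x ∩ B n).card : ℝ)) * (φ x) ^ 2 ≤
          γ * ((B n).card : ℝ) / ((n : ℝ) ^ 2 * ((B (n / 2)).card : ℝ)) *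
            ∑ x ∈ B n, (φ x) ^ 2 := by
  refine ⟨4 * (k + 1), by positivity, ?_⟩
  intro V _ _ G _ hconn hreg o n hn B φ
  have hdistadj : ∀ x y : V, G.Adj x y → G.dist o y ≤ G.dist o x + 1 := by
    intro x y hxy
    calc G.dist o y ≤ G.dist o x + G.dist x y := hconn.dist_triangle
      _ ≤ G.dist o x + 1 := by
          have : G.dist x y ≤ 1 := by
            simpa using SimpleGraph.dist_le (SimpleGraph.Walk.cons hxy SimpleGraph.Walk.nil)
          omega
  -- Lipschitz bound per edge
  have hlip : ∀ x y : V, G.Adj x y → (φ x - φ y) ^ 2 ≤ 1 := by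
    intro x y hxy
    have h1 := hdistadj x y hxy
    have h2 := hdistadj y x hxy.symm
    have e1 : min ((n + 1) / 2) (n - G.dist o x) ≤ min ((n + 1) / 2) (n - G.dist o y) + 1 := by
      omega
    have e2 : min ((n + 1) / 2) (n - G.dist o y) ≤ min ((n + 1) / 2) (n - G.dist o x) + 1 := by
      omega
    have c1 : (φ x : ℝ) ≤ φ y + 1 := by
      simp only [φ]
      exact_mod_cast Nat.cast_le.2 e1
    have c2 : (φ y : ℝ) ≤ φ x + 1 := by
      simp only [φ]
      exact_mod_cast Nat.cast_le.2 e2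
    nlinarith [sq_nonneg (φ x - φ y)]
  -- boundary term vanishes
  have hbd : ∀ x ∈ B n, 2 * ((k : ℝ) - ((G.neighborFinset x ∩ B n).card : ℝ)) * (φ x) ^ 2 = 0 := by
    intro x hx
    by_cases h : G.dist o x < n
    · have hsub : G.neighborFinset x ⊆ B n := by
        intro y hy
        rw [SimpleGraph.mem_neighborFinset] at hy
        have := hdistadj x y hy
        simp only [B, Finset.mem_filter, Finset.mem_univ, true_and]
        omega
      rw [Finset.inter_eq_left.2 hsub]
      have : (G.neighborFinset x).card = k := hreg x
      rw [this]
      ring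
    · have hx' : G.dist o x ≤ n := by
        simpa [B] using hx
      have hd : G.dist o x = n := le_antisymm hx' (not_lt.1 h)
      have : φ x = 0 := by simp [φ, hd]
      rw [this]; ring
  have hbdsum : ∑ x ∈ B n, 2 * ((k : ℝ) - ((G.neighborFinset x ∩ B n).card : ℝ)) * (φ x) ^ 2 = 0 :=
    Finset.sum_eq_zero hbd
  -- edge sum bound
  have hedge : ∑ x ∈ B n, ∑ y ∈ B n, (if G.Adj x y then (φ x - φ y) ^ 2 else 0)
      ≤ (k : ℝ) * (B n).card := by
    have inner : ∀ x ∈ B n, ∑ y ∈ B n, (if G.Adj x y then (φ x - φ y) ^ 2 else 0) ≤ (k : ℝ) := by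
      intro x _
      calc ∑ y ∈ B n, (if G.Adj x y then (φ x - φ y) ^ 2 else 0)
          ≤ ∑ y ∈ B n, (if G.Adj x y then (1 : ℝ) else 0) := by
            refine Finset.sum_le_sum fun y _ => ?_
            by_cases h : G.Adj x y
            · simpa [h] using hlip x y h
            · simp [h]
        _ = (((B n).filter (fun y => G.Adj x y)).card : ℝ) := by
            rw [Finset.sum_boole]
        _ ≤ ((G.neighborFinset x).card : ℝ) := by
            have : (B n).filter (fun y => G.Adj x y) ⊆ G.neighborFinset x := by
              intro y hy
              rw [SimpleGraph.mem_neighborFinset]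
              exact (Finset.mem_filter.1 hy).2
            exact_mod_cast Finset.card_le_card this
        _ = (k : ℝ) := by exact_mod_cast (hreg x : (G.neighborFinset x).card = k)
    calc ∑ x ∈ B n, ∑ y ∈ B n, (if G.Adj x y then (φ x - φ y) ^ 2 else 0)
        ≤ ∑ _x ∈ B n, (k : ℝ) := Finset.sum_le_sum inner
      _ = (k : ℝ) * (B n).card := by rw [Finset.sum_const]; ring
  -- lower bound on ∑ φ²
  have hS : ((n : ℝ) ^ 2 / 4) * ((B (n / 2)).card : ℝ) ≤ ∑ x ∈ B n, (φ x) ^ 2 := by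
    have hsub : B (n / 2) ⊆ B n := by
      intro x hx
      simp only [B, Finset.mem_filter, Finset.mem_univ, true_and] at hx ⊢
      omega
    have step : ∀ x ∈ B (n / 2), ((n : ℝ) ^ 2 / 4) ≤ (φ x) ^ 2 := by
      intro x hx
      have hd : G.dist o x ≤ n / 2 := by simpa [B] using hx
      have hφ : min ((n + 1) / 2) (n - G.dist o x) = (n + 1) / 2 := by omega
      have hge : (n : ℝ) ≤ 2 * (((n + 1) / 2 : ℕ) : ℝ) := by
        have : n ≤ 2 * ((n + 1) / 2) := by omega
        exact_mod_cast this
      have : φ x = (((n + 1) / 2 : ℕ) : ℝ) := by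
        show ((min ((n + 1) / 2) (n - G.dist o x) : ℕ) : ℝ) = _
        rw [hφ]
      rw [this]
      nlinarith [Nat.cast_nonneg (α := ℝ) ((n + 1) / 2)]
    calc ((n : ℝ) ^ 2 / 4) * ((B (n / 2)).card : ℝ)
        = ∑ _x ∈ B (n / 2), ((n : ℝ) ^ 2 / 4) := by rw [Finset.sum_const]; ring
      _ ≤ ∑ x ∈ B (n / 2), (φ x) ^ 2 := Finset.sum_le_sum step
      _ ≤ ∑ x ∈ B n, (φ x) ^ 2 :=
          Finset.sum_le_sum_of_subset_of_nonneg hsub (fun x _ _ => sq_nonneg _)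
  -- positivity of cards
  have ho : ∀ m : ℕ, o ∈ B m := by
    intro m
    simp [B, SimpleGraph.dist_self]
  have hVn : (1 : ℝ) ≤ ((B n).card : ℝ) := by
    exact_mod_cast Finset.card_pos.2 ⟨o, ho n⟩
  have hV2 : (1 : ℝ) ≤ ((B (n / 2)).card : ℝ) := by
    exact_mod_cast Finset.card_pos.2 ⟨o, ho (n / 2)⟩
  have hc : (0 : ℝ) < (n : ℝ) ^ 2 * ((B (n / 2)).card : ℝ) := by
    have hn' : (1 : ℝ) ≤ (n : ℝ) := by exact_mod_cast hn
    nlinarith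
  set c : ℝ := (n : ℝ) ^ 2 * ((B (n / 2)).card : ℝ) with hcdef
  have hRHS : ((k : ℝ) + 1) * ((B n).card : ℝ)
      ≤ (4 * ((k : ℝ) + 1)) * ((B n).card : ℝ) / c * ∑ x ∈ B n, (φ x) ^ 2 := by
    have hfac : (0 : ℝ) ≤ (4 * ((k : ℝ) + 1)) * ((B n).card : ℝ) / c := by positivity
    have h1 : (4 * ((k : ℝ) + 1)) * ((B n).card : ℝ) / c * (c / 4)
        ≤ (4 * ((k : ℝ) + 1)) * ((B n).card : ℝ) / c * ∑ x ∈ B n, (φ x) ^ 2 := by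
      apply mul_le_mul_of_nonneg_left _ hfac
      calc c / 4 = (n : ℝ) ^ 2 / 4 * ((B (n / 2)).card : ℝ) := by rw [hcdef]; ring
        _ ≤ _ := hS
    have h2 : (4 * ((k : ℝ) + 1)) * ((B n).card : ℝ) / c * (c / 4)
        = ((k : ℝ) + 1) * ((B n).card : ℝ) := by
      field_simp
    linarith
  have hk1 : (k : ℝ) * ((B n).card : ℝ) ≤ ((k : ℝ) + 1) * ((B n).card : ℝ) := by nlinarith
  calc (1 / 2 : ℝ) * (∑ x ∈ B n, ∑ y ∈ B n, if G.Adj x y then (φ x - φ y) ^ 2 else 0) +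
        ∑ x ∈ B n, 2 * ((k : ℝ) - ((G.neighborFinset x ∩ B n).card : ℝ)) * (φ x) ^ 2
      ≤ (1 / 2 : ℝ) * ((k : ℝ) * (B n).card) + 0 := by
        rw [hbdsum]; gcongr
    _ ≤ ((k : ℝ) + 1) * ((B n).card : ℝ) := by
        have hkV : (0 : ℝ) ≤ (k : ℝ) * ((B n).card : ℝ) := by positivity
        linarith
    _ ≤ (4 * ((k : ℝ) + 1)) * ((B n).card : ℝ) / c * ∑ x ∈ B n, (φ x) ^ 2 := hRHS
    _ = (4 * ((k : ℝ) + 1)) * ((B n).card : ℝ) / c * ∑ x ∈ B n, (φ x) ^ 2 := rfl
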